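/- Let B¹ₙ₊₁ = {(p₀,…,pₙ) ∈ PConfₙ₊₁(D^m) : p₁ ∈ ∂D^m, and p_i ∈ B for all i ≠ 1} and E¹ₙ₊₁ = {(p₀,…,pₙ) ∈ PConfₙ₊₁(D^m) : p₁ ∈ ∂D^m, p₂,…,pₙ ∈ B} (where p₀ may lie anywhere in D^m). Then the inclusion B¹ₙ₊₁ ↪ E¹ₙ₊₁ is a homotopy equivalence, via the flow of the vector field v(p) = −(p − p₁) which pushes all points except p₁ into the interior of the ball. -/
import Mathlib


open Metric Function

noncomputable section

abbrev E (m : ℕ) := EuclideanSpace ℝ (Fin m)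

/-- `B¹ₙ₊₂`: configurations `(p₀, p₁, …)` of `n + 2` distinct points of the closed
unit ball in which `p₁` lies on the boundary sphere and every other point
(including the added point `p₀`) lies in the open ball. -/
def BConf (m n : ℕ) : Set (Fin (n + 2) → E m) :=
  {p | Function.Injective p ∧ p 1 ∈ sphere (0 : E m) 1 ∧
    ∀ i, i ≠ 1 → p i ∈ ball (0 : E m) 1}

/-- `E¹ₙ₊₂`: as `B¹ₙ₊₂` but the added point `p₀` may lie anywhere in the closed
ball, including its boundary. -/
def EConf (m n : ℕ) : Set (Fin (n + 2) → E m) :=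
  {p | Function.Injective p ∧ p 1 ∈ sphere (0 : E m) 1 ∧
    p 0 ∈ closedBall (0 : E m) 1 ∧ ∀ i, i ≠ 0 → i ≠ 1 → p i ∈ ball (0 : E m) 1}

namespace BEAux

variable {m n : ℕ}

/-- The scaling flow: scale everything towards `p 1` by factor `c`. -/
def Φ (c : ℝ) (p : Fin (n + 2) → E m) : Fin (n + 2) → E m :=
  fun i => p 1 + c • (p i - p 1)

lemma Φ_one (p : Fin (n + 2) → E m) : Φ 1 p = p := by
  funext i; simp [Φ]

lemma BConf_subset_EConf : BConf m n ⊆ EConf m n := by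
  rintro p ⟨hinj, h1, hball⟩
  exact ⟨hinj, h1, ball_subset_closedBall (hball 0 (by exact fun h => by simpa using congrArg Fin.val h)),
    fun i _ hi1 => hball i hi1⟩

lemma Φ_mem_BConf {c : ℝ} (hc0 : 0 < c) (hc1 : c < 1) {p : Fin (n + 2) → E m}
    (hp : p ∈ EConf m n) : Φ c p ∈ BConf m n := by
  obtain ⟨hinj, h1, h0, hball⟩ := hp
  refine ⟨?_, ?_, ?_⟩
  · intro i j hij
    apply hinj
    have h2 : c • (p i - p 1) = c • (p j - p 1) := by
      have := hij
      simpa [Φ] using this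
    have h3 : p i - p 1 = p j - p 1 := smul_right_injective (E m) (ne_of_gt hc0) h2
    exact sub_left_injective h3
  · simpa [Φ] using h1
  · intro i hi1
    have hpi : p i ∈ closedBall (0 : E m) 1 := by
      by_cases hi0 : i = 0
      · rw [hi0]; exact h0
      · exact ball_subset_closedBall (hball i hi0 hi1)
    have hne : p 1 ≠ p i := fun h => hi1 (hinj h).symm
    have hcomb : Φ c p i = (1 - c) • p 1 + c • p i := by
      simp only [Φ]; module
    rw [hcomb]
    have := strictConvex_closedBall ℝ (0 : E m) 1
      (sphere_subset_closedBall h1) hpi hne (a := 1 - c) (b := c)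
      (by linarith) hc0 (by ring)
    rwa [interior_closedBall (0 : E m) one_ne_zero] at this

lemma Φ_mem_EConf {c : ℝ} (hc0 : 0 < c) (hc1 : c ≤ 1) {p : Fin (n + 2) → E m}
    (hp : p ∈ EConf m n) : Φ c p ∈ EConf m n := by
  rcases lt_or_eq_of_le hc1 with h | h
  · exact BConf_subset_EConf (Φ_mem_BConf hc0 h hp)
  · rw [h, Φ_one]; exact hp

lemma Φ_mem_BConf' {c : ℝ} (hc0 : 0 < c) (hc1 : c ≤ 1) {p : Fin (n + 2) → E m}
    (hp : p ∈ BConf m n) : Φ c p ∈ BConf m n := by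
  rcases lt_or_eq_of_le hc1 with h | h
  · exact Φ_mem_BConf hc0 h (BConf_subset_EConf hp)
  · rw [h, Φ_one]; exact hp

lemma continuous_Φ {X : Type*} [TopologicalSpace X] {f : X → Fin (n + 2) → E m}
    {c : X → ℝ} (hf : Continuous f) (hc : Continuous c) :
    Continuous fun x => Φ (c x) (f x) := by
  apply continuous_pi
  intro i
  exact ((continuous_apply 1).comp hf).add
    (hc.smul (((continuous_apply i).comp hf).sub ((continuous_apply 1).comp hf)))

end BEAux

open BEAux in
/-- The inclusion `B¹ₙ₊₁ ↪ E¹ₙ₊₁` is a homotopy equivalence, with homotopy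
inverse given by flowing along the vector field `v(p) = −(p − p₁)` (scaling all
points toward the boundary point `p₁`, here for time `log 2`). -/
theorem BConf_EConf_homotopyEquiv (m n : ℕ) (hm : 1 ≤ m) :
    BConf m n ⊆ EConf m n ∧
    ∃ e : ContinuousMap.HomotopyEquiv ↥(BConf m n) ↥(EConf m n),
      (∀ p : ↥(BConf m n), ((e.toFun p : ↥(EConf m n)) : Fin (n + 2) → E m)
          = (p : Fin (n + 2) → E m)) ∧
      (∀ q : ↥(EConf m n), ((e.invFun q : ↥(BConf m n)) : Fin (n + 2) → E m)
          = fun i => (q : Fin (n + 2) → E m) 1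
              + (2⁻¹ : ℝ) • ((q : Fin (n + 2) → E m) i - (q : Fin (n + 2) → E m) 1)) := by
  refine ⟨BConf_subset_EConf, ?_⟩
  -- the inclusion
  set f : C(↥(BConf m n), ↥(EConf m n)) :=
    ⟨fun p => ⟨(p : Fin (n + 2) → E m), BConf_subset_EConf p.2⟩,
      Continuous.subtype_mk continuous_subtype_val _⟩ with hf
  -- the retraction
  set g : C(↥(EConf m n), ↥(BConf m n)) :=
    ⟨fun q => ⟨Φ (2⁻¹ : ℝ) (q : Fin (n + 2) → E m),
        Φ_mem_BConf (by norm_num) (by norm_num) q.2⟩,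
      Continuous.subtype_mk (continuous_Φ continuous_subtype_val continuous_const) _⟩
    with hg
  have hcval : ∀ t : unitInterval, (0 : ℝ) < (1 + (t : ℝ)) / 2 ∧ (1 + (t : ℝ)) / 2 ≤ 1 := by
    intro t
    constructor
    · have := t.2.1; linarith
    · have := t.2.2; linarith
  -- homotopy on BConf : from g ∘ f to id
  have leftH : (g.comp f).Homotopic (ContinuousMap.id _) := by
    refine ⟨⟨⟨fun x => ⟨Φ ((1 + (x.1 : ℝ)) / 2) (x.2 : Fin (n + 2) → E m),
        Φ_mem_BConf' (hcval x.1).1 (hcval x.1).2 x.2.2⟩, ?_⟩, ?_, ?_⟩⟩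
    · exact Continuous.subtype_mk
        (continuous_Φ (continuous_subtype_val.comp continuous_snd)
          (by continuity)) _
    · intro p
      apply Subtype.ext
      show Φ ((1 + (0 : ℝ)) / 2) _ = _
      rw [show ((1 + (0 : ℝ)) / 2) = (2⁻¹ : ℝ) by norm_num]
      rfl
    · intro p
      apply Subtype.ext
      show Φ ((1 + (1 : ℝ)) / 2) _ = _
      norm_num [Φ_one]
  -- homotopy on EConf : from f ∘ g to id
  have rightH : (f.comp g).Homotopic (ContinuousMap.id _) := by
    refine ⟨⟨⟨fun x => ⟨Φ ((1 + (x.1 : ℝ)) / 2) (x.2 : Fin (n + 2) → E m),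
        Φ_mem_EConf (hcval x.1).1 (hcval x.1).2 x.2.2⟩, ?_⟩, ?_, ?_⟩⟩
    · exact Continuous.subtype_mk
        (continuous_Φ (continuous_subtype_val.comp continuous_snd)
          (by continuity)) _
    · intro p
      apply Subtype.ext
      show Φ ((1 + (0 : ℝ)) / 2) _ = _
      rw [show ((1 + (0 : ℝ)) / 2) = (2⁻¹ : ℝ) by norm_num]
      rfl
    · intro p
      apply Subtype.ext
      show Φ ((1 + (1 : ℝ)) / 2) _ = _
      norm_num [Φ_one]
  refine ⟨⟨f, g, leftH, rightH⟩, ?_, ?_⟩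
  · intro p; rfl
  · intro q; rfl
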